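/- (Theorem 3, solvable case) Let λ₀ ∈ ℝ with det A(λ₀) = 0 and rank A(λ₀) = r, and suppose d(λ₀) is orthogonal to every solution of the adjoint homogeneous system A(λ₀)ᵀ y = 0. Then the set of continuous solutions of the loaded Volterra integral equation (with λ = λ₀) is nonempty and is in bijection with an affine subspace of ℝ^{m−1} of dimension (m−1) − r; that is, the LVIE has a family of solutions depending on (m−1) − r arbitrary constants. -/

import Mathlib

/-!
After extending `K`, `f` and the `a_j` continuously beyond the triangle and the interval (which
does not change the equation), everything reduces to the classical theory of a Volterra equation
`x = λ ∫ K x + g` with continuous kernel. The iterated kernels satisfy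
`|K_{n+1}(t,s)| ≤ M^{n+1} |t - s|^n / n!`, so the Neumann series converges locally uniformly, the
resolvent `R` is continuous and `R = λ K + λ ∫ K R`; with Fubini on the triangle this shows that
`g + ∫ R g` is a solution, and the same factorial estimate shows that the homogeneous equation has
only the zero solution. Hence a solution `x` of the loaded equation with loads `c_j = x(t_j)` is
`F - Σ_j b_j c_j`, and this is consistent at the nodes exactly when `A c = d`: the loads map is a
bijection onto the solution set of the linear system. That set is nonempty because `d ⊥ ker Aᵀ`
forces `d ∈ range A`, and it is a translate of `ker A`, of dimension `(m - 1) - rank A`.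
-/

open MeasureTheory Matrix Set intervalIntegral Function
open scoped Interval

theorem norm_integral_le_mul_abs_sub_pow {f : ℝ → ℝ} {s t C : ℝ} {n : ℕ}
    (hf : ∀ z ∈ Ι s t, ‖f z‖ ≤ C * |z - s| ^ n) :
    ‖∫ z in s..t, f z‖ ≤ C * (|t - s| ^ (n + 1) / (n + 1)) := by
  calc ‖∫ z in s..t, f z‖ ≤ ∫ z in Ι s t, ‖f z‖ := norm_integral_le_integral_norm_uIoc
    _ ≤ ∫ z in Ι s t, C * |z - s| ^ n :=
      integral_mono_of_nonneg (.of_forall fun _ => norm_nonneg _)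
        (Continuous.integrableOn_uIoc (by fun_prop))
        ((ae_restrict_iff' measurableSet_uIoc).2 (.of_forall hf))
    _ = C * (|t - s| ^ (n + 1) / (n + 1)) := by
      rw [MeasureTheory.integral_const_mul, integral_pow_abs_sub_uIoc]

theorem exists_abs_le_of_continuous {K : ℝ → ℝ → ℝ} (hK : Continuous (uncurry K)) (a b : ℝ) :
    ∃ M, ∀ t ∈ Icc a b, ∀ s ∈ Icc a b, |K t s| ≤ M := by
  obtain ⟨M, hM⟩ := (isCompact_Icc.prod isCompact_Icc).exists_bound_of_continuousOn
    (s := Icc a b ×ˢ Icc a b) hK.continuousOn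
  exact ⟨M, fun t ht s hs => hM (t, s) ⟨ht, hs⟩⟩

-- Indexed from `0`: `iteratedKernel K n` is the iterated kernel `K_{n+1}`.
noncomputable def iteratedKernel (K : ℝ → ℝ → ℝ) : ℕ → ℝ → ℝ → ℝ
  | 0 => K
  | n + 1 => fun t s => ∫ z in s..t, K t z * iteratedKernel K n z s

noncomputable def volterraResolvent (K : ℝ → ℝ → ℝ) (lam t s : ℝ) : ℝ :=
  ∑' n, lam ^ (n + 1) * iteratedKernel K n t s

noncomputable def resolventSolution (K : ℝ → ℝ → ℝ) (lam t₀ : ℝ) (g : ℝ → ℝ) (t : ℝ) : ℝ :=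
  g t + ∫ s in t₀..t, volterraResolvent K lam t s * g s

section Resolvent

variable {K : ℝ → ℝ → ℝ}

theorem iteratedKernel_succ (n : ℕ) (t s : ℝ) :
    iteratedKernel K (n + 1) t s = ∫ z in s..t, K t z * iteratedKernel K n z s :=
  rfl

theorem continuous_iteratedKernel (hK : Continuous (uncurry K)) (n : ℕ) :
    Continuous (uncurry (iteratedKernel K n)) := by
  induction n with
  | zero => exact hK
  | succ n ih =>
    have hF : Continuous (uncurry fun (q : ℝ × ℝ) z => K q.1 z * iteratedKernel K n z q.2) :=
      (hK.comp (continuous_fst.fst.prodMk continuous_snd)).mul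
        (ih.comp (continuous_snd.prodMk continuous_fst.snd))
    -- the parametric continuity lemma only lets the upper limit vary, so split at `0`
    have hsplit : uncurry (iteratedKernel K (n + 1)) = fun q =>
        (∫ z in (0 : ℝ)..q.1, K q.1 z * iteratedKernel K n z q.2) -
          ∫ z in (0 : ℝ)..q.2, K q.1 z * iteratedKernel K n z q.2 := by
      funext q
      exact (integral_interval_sub_left ((hF.uncurry_left q).intervalIntegrable _ _)
        ((hF.uncurry_left q).intervalIntegrable _ _)).symm
    rw [hsplit]
    exact (continuous_parametric_intervalIntegral_of_continuous hF continuous_fst).sub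
      (continuous_parametric_intervalIntegral_of_continuous hF continuous_snd)

theorem abs_iteratedKernel_le {a b M : ℝ} (hM : ∀ t ∈ Icc a b, ∀ s ∈ Icc a b, |K t s| ≤ M)
    (n : ℕ) {t s : ℝ} (ht : t ∈ Icc a b) (hs : s ∈ Icc a b) :
    |iteratedKernel K n t s| ≤ M ^ (n + 1) * |t - s| ^ n / n.factorial := by
  induction n generalizing t with
  | zero => simpa [iteratedKernel] using hM t ht s hs
  | succ n ih =>
    have hM0 : 0 ≤ M := (abs_nonneg _).trans (hM t ht s hs)
    have hbound : ∀ z ∈ Ι s t, ‖K t z * iteratedKernel K n z s‖ ≤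
        M ^ (n + 2) / n.factorial * |z - s| ^ n := by
      intro z hz
      have hz' : z ∈ Icc a b := uIcc_subset_Icc hs ht (uIoc_subset_uIcc hz)
      rw [Real.norm_eq_abs, abs_mul]
      calc |K t z| * |iteratedKernel K n z s|
          ≤ M * (M ^ (n + 1) * |z - s| ^ n / n.factorial) :=
            mul_le_mul (hM t ht z hz') (ih hz') (abs_nonneg _) hM0
        _ = M ^ (n + 2) / n.factorial * |z - s| ^ n := by ring
    have := norm_integral_le_mul_abs_sub_pow hbound
    rw [Real.norm_eq_abs] at this
    refine this.trans_eq ?_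
    rw [Nat.factorial_succ]
    push_cast
    field_simp

theorem norm_resolvent_term_le {a b M lam : ℝ} (hM : ∀ t ∈ Icc a b, ∀ s ∈ Icc a b, |K t s| ≤ M)
    (n : ℕ) {t s : ℝ} (ht : t ∈ Icc a b) (hs : s ∈ Icc a b) :
    ‖lam ^ (n + 1) * iteratedKernel K n t s‖ ≤
      |lam| * M * ((|lam| * M * (b - a)) ^ n / n.factorial) := by
  have hM0 : 0 ≤ M := (abs_nonneg _).trans (hM t ht s hs)
  have hts : |t - s| ≤ b - a := abs_sub_le_of_le_of_le ht.1 ht.2 hs.1 hs.2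
  rw [Real.norm_eq_abs, abs_mul, abs_pow]
  calc |lam| ^ (n + 1) * |iteratedKernel K n t s|
      ≤ |lam| ^ (n + 1) * (M ^ (n + 1) * (b - a) ^ n / n.factorial) := by
        gcongr
        exact (abs_iteratedKernel_le hM n ht hs).trans (by gcongr)
    _ = |lam| * M * ((|lam| * M * (b - a)) ^ n / n.factorial) := by rw [mul_pow]; ring

theorem continuousOn_volterraResolvent (hK : Continuous (uncurry K)) (lam a b : ℝ) :
    ContinuousOn (uncurry (volterraResolvent K lam)) (Icc a b ×ˢ Icc a b) := by
  obtain ⟨M, hM⟩ := exists_abs_le_of_continuous hK a b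
  exact continuousOn_tsum
    (fun n => (continuous_const.mul (continuous_iteratedKernel hK n)).continuousOn)
    ((Real.summable_pow_div_factorial _).mul_left _) fun n q hq =>
      norm_resolvent_term_le hM n hq.1 hq.2

theorem continuous_volterraResolvent (hK : Continuous (uncurry K)) (lam : ℝ) :
    Continuous (uncurry (volterraResolvent K lam)) := by
  refine continuous_iff_continuousAt.2 fun q =>
    (continuousOn_volterraResolvent hK lam (min q.1 q.2 - 1) (max q.1 q.2 + 1)).continuousAt
      (prod_mem_nhds (Icc_mem_nhds ?_ ?_) (Icc_mem_nhds ?_ ?_)) <;>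
  linarith [min_le_left q.1 q.2, min_le_right q.1 q.2, le_max_left q.1 q.2, le_max_right q.1 q.2]

theorem volterraResolvent_eq (hK : Continuous (uncurry K)) (lam t s : ℝ) :
    volterraResolvent K lam t s =
      lam * K t s + lam * ∫ z in s..t, K t z * volterraResolvent K lam z s := by
  obtain ⟨M, hM⟩ := exists_abs_le_of_continuous hK (s ⊓ t) (s ⊔ t)
  have hs : s ∈ Icc (s ⊓ t) (s ⊔ t) := left_mem_uIcc
  have ht : t ∈ Icc (s ⊓ t) (s ⊔ t) := right_mem_uIcc
  have hterm : ∀ n, ∀ z ∈ Icc (s ⊓ t) (s ⊔ t), ‖K t z * (lam ^ (n + 1) * iteratedKernel K n z s)‖ ≤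
      M * (|lam| * M * ((|lam| * M * (s ⊔ t - s ⊓ t)) ^ n / n.factorial)) := by
    intro n z hz
    rw [norm_mul, Real.norm_eq_abs]
    exact mul_le_mul (hM t ht z hz) (norm_resolvent_term_le hM n hz hs) (norm_nonneg _)
      ((abs_nonneg _).trans (hM t ht z hz))
  have hsum : HasSum (fun n => ∫ z in s..t, K t z * (lam ^ (n + 1) * iteratedKernel K n z s))
      (∫ z in s..t, K t z * volterraResolvent K lam z s) := by
    refine intervalIntegral.hasSum_integral_of_dominated_convergence
      (fun n _ => M * (|lam| * M * ((|lam| * M * (s ⊔ t - s ⊓ t)) ^ n / n.factorial)))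
      (fun n => ?_) (fun n => .of_forall fun z hz => hterm n z (uIoc_subset_uIcc hz))
      (.of_forall fun _ _ => ((Real.summable_pow_div_factorial _).mul_left _).mul_left M)
      intervalIntegrable_const (.of_forall fun z hz => ?_)
    · exact ((hK.comp (continuous_const.prodMk continuous_id)).mul (continuous_const.mul
        ((continuous_iteratedKernel hK n).comp (continuous_id.prodMk continuous_const))))
        |>.aestronglyMeasurable
    · exact (((Real.summable_pow_div_factorial _).mul_left _).of_norm_bounded
        fun n => norm_resolvent_term_le hM n (uIoc_subset_uIcc hz) hs).hasSum.mul_left (K t z)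
  have hstep : ∀ n, ∫ z in s..t, K t z * (lam ^ (n + 1) * iteratedKernel K n z s) =
      lam ^ (n + 1) * iteratedKernel K (n + 1) t s := fun n => by
    simp_rw [iteratedKernel_succ, mul_left_comm (K t _)]
    exact integral_const_mul _ _
  simp_rw [hstep] at hsum
  have hshift : HasSum (fun n => lam ^ (n + 1 + 1) * iteratedKernel K (n + 1) t s)
      (lam * ∫ z in s..t, K t z * volterraResolvent K lam z s) := by
    have e : (fun n => lam ^ (n + 1 + 1) * iteratedKernel K (n + 1) t s) =
        fun n => lam * (lam ^ (n + 1) * iteratedKernel K (n + 1) t s) := funext fun n => by ring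
    rw [e]
    exact hsum.mul_left lam
  rw [volterraResolvent,
    (HasSum.zero_add (f := fun n => lam ^ (n + 1) * iteratedKernel K n t s) hshift).tsum_eq,
    zero_add, pow_one]
  rfl

end Resolvent

theorem integral_integral_swap_triangle {H : ℝ → ℝ → ℝ} (hH : Continuous (uncurry H)) {a b : ℝ}
    (hab : a ≤ b) :
    ∫ s in a..b, ∫ u in a..s, H s u = ∫ u in a..b, ∫ s in u..b, H s u := by
  set G : ℝ × ℝ → ℝ := {q | q.2 < q.1}.indicator (uncurry H)
  have hG : Integrable (uncurry fun s u => G (s, u))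
      ((volume.restrict (Ioc a b)).prod (volume.restrict (Ioc a b))) := by
    rw [Measure.prod_restrict, ← Measure.volume_eq_prod]
    exact ((hH.continuousOn.integrableOn_compact (isCompact_Icc.prod isCompact_Icc)).mono_set
      (prod_mono Ioc_subset_Icc_self Ioc_subset_Icc_self)).indicator
      (measurableSet_lt measurable_snd measurable_fst)
  have hleft : ∀ s ∈ Ioc a b, ∫ u in a..s, H s u = ∫ u in Ioc a b, G (s, u) := by
    intro s hs
    have : (fun u => G (s, u)) = (Iio s).indicator (H s) := by
      ext u; simp [G, indicator]
    rw [this, integral_Ioc_eq_integral_Ioo, setIntegral_indicator measurableSet_Iio, Ioo_inter_Iio,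
      min_eq_right hs.2, integral_of_le hs.1.le, integral_Ioc_eq_integral_Ioo]
  have hright : ∀ u ∈ Ioc a b, ∫ s in u..b, H s u = ∫ s in Ioc a b, G (s, u) := by
    intro u hu
    have : (fun s => G (s, u)) = (Ioi u).indicator (H · u) := by
      ext s; simp [G, indicator]
    rw [this, setIntegral_indicator measurableSet_Ioi, Ioc_inter_Ioi, max_eq_right hu.1.le,
      integral_of_le hu.2]
  rw [integral_of_le hab, integral_of_le hab, setIntegral_congr_fun measurableSet_Ioc hleft,
    setIntegral_congr_fun measurableSet_Ioc hright]
  exact integral_integral_swap hG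

section VolterraEquation

variable {K : ℝ → ℝ → ℝ} {lam t₀ : ℝ} {g : ℝ → ℝ}

theorem continuous_resolventSolution (hK : Continuous (uncurry K)) (hg : Continuous g) :
    Continuous (resolventSolution K lam t₀ g) :=
  hg.add (continuous_parametric_intervalIntegral_of_continuous
    ((continuous_volterraResolvent hK lam).mul (hg.comp continuous_snd)) continuous_id)

theorem resolventSolution_eq (hK : Continuous (uncurry K)) (hg : Continuous g) {t : ℝ}
    (ht : t₀ ≤ t) :
    resolventSolution K lam t₀ g t =
      lam * (∫ s in t₀..t, K t s * resolventSolution K lam t₀ g s) + g t := by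
  set R := volterraResolvent K lam
  have hR : Continuous (uncurry R) := continuous_volterraResolvent hK lam
  have hKt : Continuous (K t) := hK.comp (continuous_const.prodMk continuous_id)
  have hRt : Continuous (R t) := hR.comp (continuous_const.prodMk continuous_id)
  have hH : Continuous (uncurry fun s u => K t s * (R s u * g u)) :=
    (hKt.comp continuous_fst).mul (hR.mul (hg.comp continuous_snd))
  have hinner : ∀ u, lam * ∫ s in u..t, K t s * (R s u * g u) = (R t u - lam * K t u) * g u := by
    intro u
    have hRtu : R t u = lam * K t u + lam * ∫ s in u..t, K t s * R s u :=
      volterraResolvent_eq hK lam t u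
    simp_rw [← mul_assoc, intervalIntegral.integral_mul_const, hRtu]
    ring
  have hsplit : ∀ s, K t s * resolventSolution K lam t₀ g s =
      K t s * g s + ∫ u in t₀..s, K t s * (R s u * g u) := fun s => by
    rw [resolventSolution, mul_add, intervalIntegral.integral_const_mul]
  have hKRg : Continuous fun s => ∫ u in t₀..s, K t s * (R s u * g u) :=
    continuous_parametric_intervalIntegral_of_continuous hH continuous_id
  suffices lam * ∫ s in t₀..t, K t s * resolventSolution K lam t₀ g s = ∫ s in t₀..t, R t s * g s by
    rw [this, resolventSolution, add_comm]
  calc lam * ∫ s in t₀..t, K t s * resolventSolution K lam t₀ g s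
      = lam * ((∫ s in t₀..t, K t s * g s) +
          ∫ s in t₀..t, ∫ u in t₀..s, K t s * (R s u * g u)) := by
        simp_rw [hsplit]
        rw [integral_add (f := fun s => K t s * g s) ((hKt.mul hg).intervalIntegrable _ _)
          (hKRg.intervalIntegrable _ _)]
    _ = lam * (∫ s in t₀..t, K t s * g s) +
          ∫ u in t₀..t, lam * ∫ s in u..t, K t s * (R s u * g u) := by
        rw [integral_integral_swap_triangle hH ht, mul_add, intervalIntegral.integral_const_mul]
    _ = ∫ s in t₀..t, R t s * g s := by
        simp_rw [hinner, sub_mul, mul_assoc]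
        rw [integral_sub (f := fun u => R t u * g u) (g := fun u => lam * (K t u * g u))
          ((hRt.mul hg).intervalIntegrable _ _)
          ((continuous_const.mul (hKt.mul hg)).intervalIntegrable _ _),
          intervalIntegral.integral_const_mul]
        ring

theorem eqOn_zero_of_volterra (hK : Continuous (uncurry K)) {x : ℝ → ℝ} (hx : Continuous x)
    {T : ℝ} (h : ∀ t ∈ Icc t₀ T, x t = lam * ∫ s in t₀..t, K t s * x s) :
    EqOn x 0 (Icc t₀ T) := by
  obtain ⟨M, hM⟩ := exists_abs_le_of_continuous hK t₀ T
  obtain ⟨C, hC⟩ := isCompact_Icc.exists_bound_of_continuousOn (s := Icc t₀ T) hx.continuousOn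
  have hbound : ∀ n : ℕ, ∀ t ∈ Icc t₀ T,
      |x t| ≤ C * ((|lam| * M * |t - t₀|) ^ n / n.factorial) := by
    intro n
    induction n with
    | zero => simpa using hC
    | succ n ih =>
      intro t ht
      have hM0 : 0 ≤ M := (abs_nonneg _).trans (hM t ht t ht)
      have hint : ∀ s ∈ Ι t₀ t, ‖K t s * x s‖ ≤
          M * C * (|lam| * M) ^ n / n.factorial * |s - t₀| ^ n := by
        intro s hs
        have hs' : s ∈ Icc t₀ T := by
          rw [uIoc_of_le ht.1] at hs
          exact ⟨hs.1.le, hs.2.trans ht.2⟩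
        rw [Real.norm_eq_abs, abs_mul]
        calc |K t s| * |x s| ≤ M * (C * ((|lam| * M * |s - t₀|) ^ n / n.factorial)) :=
              mul_le_mul (hM t ht s hs') (ih s hs') (abs_nonneg _) hM0
          _ = M * C * (|lam| * M) ^ n / n.factorial * |s - t₀| ^ n := by ring
      have := norm_integral_le_mul_abs_sub_pow hint
      rw [Real.norm_eq_abs] at this
      calc |x t| = |lam| * |∫ s in t₀..t, K t s * x s| := by rw [h t ht, abs_mul]
        _ ≤ |lam| * (M * C * (|lam| * M) ^ n / n.factorial * (|t - t₀| ^ (n + 1) / (n + 1))) :=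
          mul_le_mul_of_nonneg_left this (abs_nonneg _)
        _ = C * ((|lam| * M * |t - t₀|) ^ (n + 1) / (n + 1).factorial) := by
          rw [Nat.factorial_succ]
          push_cast
          field_simp
          ring
  intro t ht
  have hlim := (FloorSemiring.tendsto_pow_div_factorial_atTop (|lam| * M * |t - t₀|)).const_mul C
  rw [mul_zero] at hlim
  exact abs_nonpos_iff.1 (ge_of_tendsto hlim (.of_forall fun n => hbound n t ht))

theorem eqOn_resolventSolution_of_volterra (hK : Continuous (uncurry K)) (hg : Continuous g)
    {x : ℝ → ℝ} (hx : Continuous x) {T : ℝ}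
    (h : ∀ t ∈ Icc t₀ T, x t = lam * (∫ s in t₀..t, K t s * x s) + g t) :
    EqOn x (resolventSolution K lam t₀ g) (Icc t₀ T) := by
  have hrs := continuous_resolventSolution (lam := lam) (t₀ := t₀) hK hg
  have hKt : ∀ t, Continuous (K t) := fun t => hK.comp (continuous_const.prodMk continuous_id)
  refine fun t ht => sub_eq_zero.1
    (eqOn_zero_of_volterra (lam := lam) hK (hx.sub hrs) (fun t ht => ?_) ht)
  rw [Pi.sub_apply, h t ht, resolventSolution_eq hK hg ht.1]
  simp_rw [Pi.sub_apply, mul_sub]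
  rw [integral_sub (f := fun s => K t s * x s)
    (g := fun s => K t s * resolventSolution K lam t₀ g s)
    ((hKt t |>.mul hx).intervalIntegrable _ _) ((hKt t |>.mul hrs).intervalIntegrable _ _)]
  ring

end VolterraEquation

namespace Matrix

variable {𝕜 m n : Type*} [Field 𝕜] [Fintype n]

theorem exists_mulVec_eq_of_forall_dotProduct_eq_zero [Fintype m] (A : Matrix m n 𝕜) {d : m → 𝕜}
    (h : ∀ y, Aᵀ *ᵥ y = 0 → d ⬝ᵥ y = 0) : ∃ c, A *ᵥ c = d := by
  classical
  by_contra hd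
  -- a functional vanishing on `range A` but not at `d` is `v ↦ y ⬝ᵥ v` with `Aᵀ *ᵥ y = 0`
  obtain ⟨φ, hφd, hφA⟩ := Submodule.exists_dual_map_eq_bot_of_notMem
    (p := LinearMap.range A.mulVecLin) (by simpa using hd) inferInstance
  set y : m → 𝕜 := fun i => φ (Pi.single i 1)
  have hφ : ∀ v, φ v = y ⬝ᵥ v := fun v => by
    rw [LinearMap.pi_apply_eq_sum_univ φ v, dotProduct]
    refine Finset.sum_congr rfl fun i _ => ?_
    rw [smul_eq_mul, mul_comm]
    congr 2
    funext j
    simp [Pi.single_apply, eq_comm]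
  refine hφd ?_
  rw [hφ, dotProduct_comm]
  refine h y (funext fun j => ?_)
  have hφA' : φ (A *ᵥ Pi.single j 1) = 0 := (Submodule.mem_bot 𝕜).1
    (hφA ▸ Submodule.mem_map_of_mem (LinearMap.mem_range_self A.mulVecLin (Pi.single j 1)))
  rw [hφ, dotProduct_mulVec, dotProduct_single, mul_one, ← mulVec_transpose] at hφA'
  exact hφA'

theorem finrank_ker_mulVecLin (A : Matrix m n 𝕜) :
    Module.finrank 𝕜 (LinearMap.ker A.mulVecLin) = Fintype.card n - A.rank := by
  have := LinearMap.finrank_range_add_finrank_ker A.mulVecLin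
  rw [Module.finrank_fintype_fun_eq_card] at this
  rw [rank]
  omega

theorem setOf_mulVec_eq {A : Matrix m n 𝕜} {c₀ : n → 𝕜} {d : m → 𝕜} (hc₀ : A *ᵥ c₀ = d) :
    {c | A *ᵥ c = d} = (c₀ + ·) '' (LinearMap.ker A.mulVecLin : Set (n → 𝕜)) := by
  ext c
  simp only [mem_image, SetLike.mem_coe, LinearMap.mem_ker, mulVecLin_apply]
  refine ⟨fun hc => ⟨c - c₀, by rw [mulVec_sub, hc, hc₀, sub_self], add_sub_cancel c₀ c⟩, ?_⟩
  rintro ⟨w, hw, rfl⟩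
  exact (mulVec_add A c₀ w).trans (by rw [hc₀, hw, add_zero])

end Matrix

def loadedSource {ι : Type*} [Fintype ι] (f : ℝ → ℝ) (a : ι → ℝ → ℝ) (c : ι → ℝ) (t : ℝ) : ℝ :=
  f t - ∑ j, a j t * c j

def IsLoadedVolterraSolution {ι : Type*} [Fintype ι] (K : ℝ → ℝ → ℝ) (lam t₀ T : ℝ)
    (f : ℝ → ℝ) (a : ι → ℝ → ℝ) (p : ι → ℝ) (x : ℝ → ℝ) : Prop :=
  ∀ t ∈ Icc t₀ T, x t + ∑ j, a j t * x (p j) = lam * (∫ s in t₀..t, K t s * x s) + f t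

section LoadedVolterra

variable {ι : Type*} [Fintype ι] {K : ℝ → ℝ → ℝ} {lam t₀ T : ℝ} {f : ℝ → ℝ}
  {a : ι → ℝ → ℝ} {p : ι → ℝ}

theorem continuous_loadedSource (hf : Continuous f) (ha : ∀ j, Continuous (a j)) (c : ι → ℝ) :
    Continuous (loadedSource f a c) :=
  hf.sub (continuous_finsetSum _ fun j _ => (ha j).mul continuous_const)

theorem resolventSolution_loadedSource (hK : Continuous (uncurry K)) (hf : Continuous f)
    (ha : ∀ j, Continuous (a j)) (c : ι → ℝ) (t : ℝ) :
    resolventSolution K lam t₀ (loadedSource f a c) t =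
      resolventSolution K lam t₀ f t - ∑ j, resolventSolution K lam t₀ (a j) t * c j := by
  have hRt : Continuous (volterraResolvent K lam t) :=
    (continuous_volterraResolvent hK lam).comp (continuous_const.prodMk continuous_id)
  simp only [resolventSolution, loadedSource, mul_sub, Finset.mul_sum, add_mul,
    Finset.sum_add_distrib]
  rw [integral_sub (f := fun s => volterraResolvent K lam t s * f s)
    ((hRt.mul hf).intervalIntegrable _ _), intervalIntegral.integral_finsetSum]
  · simp_rw [← mul_assoc, intervalIntegral.integral_mul_const]
    ring
  · exact fun j _ => (hRt.mul ((ha j).mul continuous_const)).intervalIntegrable _ _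
  · exact (continuous_finsetSum _ fun j _ =>
      hRt.mul ((ha j).mul continuous_const)).intervalIntegrable _ _

theorem isLoadedVolterraSolution_congr {K' : ℝ → ℝ → ℝ} {f' : ℝ → ℝ} {a' : ι → ℝ → ℝ}
    (hK : ∀ t s, t₀ ≤ s → s ≤ t → t ≤ T → K' t s = K t s) (hf : EqOn f' f (Icc t₀ T))
    (ha : ∀ j, EqOn (a' j) (a j) (Icc t₀ T)) (x : ℝ → ℝ) :
    IsLoadedVolterraSolution K' lam t₀ T f' a' p x ↔
      IsLoadedVolterraSolution K lam t₀ T f a p x := by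
  refine forall₂_congr fun t ht => ?_
  have hint : ∫ s in t₀..t, K' t s * x s = ∫ s in t₀..t, K t s * x s :=
    integral_congr fun s hs => by
      rw [uIcc_of_le ht.1] at hs
      simp only [hK t s hs.1 hs.2 ht.2]
  simp only [hint, hf ht, fun j => ha j ht]

theorem isLoadedVolterraSolution_iff (hK : Continuous (uncurry K)) (hf : Continuous f)
    (ha : ∀ j, Continuous (a j)) {x : ℝ → ℝ} (hx : Continuous x) :
    IsLoadedVolterraSolution K lam t₀ T f a p x ↔
      EqOn x (resolventSolution K lam t₀ (loadedSource f a fun j => x (p j))) (Icc t₀ T) := by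
  have hg := continuous_loadedSource hf ha fun j => x (p j)
  refine ⟨fun h => eqOn_resolventSolution_of_volterra hK hg hx fun t ht => ?_, fun h t ht => ?_⟩
  · simp only [loadedSource]
    linarith [h t ht]
  · have hint : ∫ s in t₀..t, K t s * x s =
        ∫ s in t₀..t, K t s * resolventSolution K lam t₀ (loadedSource f a fun j => x (p j)) s :=
      integral_congr fun s hs => by
        rw [uIcc_of_le ht.1] at hs
        rw [h ⟨hs.1, hs.2.trans ht.2⟩]
    rw [hint, h ht, resolventSolution_eq hK hg ht.1, loadedSource]
    ring

theorem mulVec_eq_iff_resolventSolution [DecidableEq ι] (hK : Continuous (uncurry K))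
    (hf : Continuous f) (ha : ∀ j, Continuous (a j)) {A : Matrix ι ι ℝ} {d : ι → ℝ}
    (hA : ∀ i j, A i j = (if i = j then 1 else 0) + resolventSolution K lam t₀ (a j) (p i))
    (hd : ∀ i, d i = resolventSolution K lam t₀ f (p i)) (c : ι → ℝ) :
    A *ᵥ c = d ↔ ∀ i, resolventSolution K lam t₀ (loadedSource f a c) (p i) = c i := by
  simp only [funext_iff, mulVec, dotProduct, hA, add_mul, Finset.sum_add_distrib, ite_mul,
    one_mul, zero_mul, Finset.sum_ite_eq, Finset.mem_univ, if_true, hd,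
    resolventSolution_loadedSource hK hf ha]
  exact forall_congr' fun i => ⟨fun h => by linarith, fun h => by linarith⟩

theorem bijOn_loads_isLoadedVolterraSolution [DecidableEq ι] (hT : t₀ ≤ T)
    (hK : Continuous (uncurry K)) (hf : Continuous f) (ha : ∀ j, Continuous (a j))
    (hp : ∀ j, p j ∈ Icc t₀ T) {A : Matrix ι ι ℝ} {d : ι → ℝ}
    (hA : ∀ i j, A i j = (if i = j then 1 else 0) + resolventSolution K lam t₀ (a j) (p i))
    (hd : ∀ i, d i = resolventSolution K lam t₀ f (p i)) :
    BijOn (fun x : C(Icc t₀ T, ℝ) => fun j => IccExtend hT x (p j))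
      {x | IsLoadedVolterraSolution K lam t₀ T f a p (IccExtend hT x)} {c | A *ᵥ c = d} := by
  have hext : ∀ x : C(Icc t₀ T, ℝ), Continuous (IccExtend hT x) := fun x =>
    x.continuous.Icc_extend'
  refine ⟨fun x hx => ?_, fun x hx y hy hxy => ?_, fun c hc => ?_⟩
  · have hsol := (isLoadedVolterraSolution_iff hK hf ha (hext x)).1 hx
    exact (mulVec_eq_iff_resolventSolution hK hf ha hA hd _).2 fun i => (hsol (hp i)).symm
  · have hsolx := (isLoadedVolterraSolution_iff hK hf ha (hext x)).1 hx
    have hsoly := (isLoadedVolterraSolution_iff hK hf ha (hext y)).1 hy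
    simp only at hxy
    rw [hxy] at hsolx
    ext t
    simpa only [IccExtend_val] using (hsolx t.2).trans (hsoly t.2).symm
  · set φ := resolventSolution K lam t₀ (loadedSource f a c)
    have hφ : Continuous φ := continuous_resolventSolution hK (continuous_loadedSource hf ha c)
    have hφc := (mulVec_eq_iff_resolventSolution hK hf ha hA hd c).1 hc
    set x : C(Icc t₀ T, ℝ) := (⟨φ, hφ⟩ : C(ℝ, ℝ)).restrict (Icc t₀ T)
    have hxφ : EqOn (IccExtend hT x) φ (Icc t₀ T) := fun t ht => IccExtend_of_mem hT x ht
    have hloads : (fun j => IccExtend hT x (p j)) = c := funext fun j => (hxφ (hp j)).trans (hφc j)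
    refine ⟨x, (isLoadedVolterraSolution_iff hK hf ha (hext x)).2 ?_, hloads⟩
    rwa [hloads]

end LoadedVolterra

theorem ContinuousOn.exists_continuous_eqOn {X : Type*} [TopologicalSpace X] [NormalSpace X]
    {s : Set X} {f : X → ℝ} (hf : ContinuousOn f s) (hs : IsClosed s) :
    ∃ g : X → ℝ, Continuous g ∧ EqOn g f s := by
  obtain ⟨g, hg⟩ := ContinuousMap.exists_restrict_eq hs ⟨s.domRestrict f, hf.domRestrict⟩
  exact ⟨g, g.continuous, fun x hx => DFunLike.congr_fun hg ⟨x, hx⟩⟩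

theorem iteratedKernel_eq_of_recursion {K Kc : ℝ → ℝ → ℝ} {Kn : ℕ → ℝ → ℝ → ℝ} {t₀ T : ℝ}
    (hKc : ∀ t s, t₀ ≤ s → s ≤ t → t ≤ T → Kc t s = K t s) (hKn1 : ∀ t s, Kn 1 t s = K t s)
    (hKnrec : ∀ n, 2 ≤ n → ∀ t s, Kn n t s = ∫ z in s..t, K t z * Kn (n - 1) z s) (n : ℕ) :
    ∀ t s, t₀ ≤ s → s ≤ t → t ≤ T → iteratedKernel Kc n t s = Kn (n + 1) t s := by
  induction n with
  | zero => exact fun t s h1 h2 h3 => (hKc t s h1 h2 h3).trans (hKn1 t s).symm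
  | succ n ih =>
    intro t s h1 h2 h3
    rw [iteratedKernel_succ, hKnrec (n + 1 + 1) (by omega), Nat.add_sub_cancel]
    refine integral_congr fun z hz => ?_
    rw [uIcc_of_le h2] at hz
    simp only [hKc t z (h1.trans hz.1) hz.2 h3, ih z s h1 hz.1 (hz.2.trans h3)]

theorem add_integral_eq_resolventSolution {K : ℝ → ℝ → ℝ} {lam t₀ t : ℝ} {R g gc : ℝ → ℝ}
    (hR : ∀ s ∈ Icc t₀ t, R s = volterraResolvent K lam t s) (hg : EqOn gc g (Icc t₀ t))
    (ht : t₀ ≤ t) :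
    g t + ∫ s in t₀..t, R s * g s = resolventSolution K lam t₀ gc t := by
  rw [resolventSolution, hg ⟨ht, le_rfl⟩]
  congr 1
  refine integral_congr fun s hs => ?_
  rw [uIcc_of_le ht] at hs
  simp only [hR s hs, hg hs]

theorem lvie_solution_family_of_solvable_slae_general
    (t₀ T : ℝ) (ht : t₀ < T) (m : ℕ)
    (p : Fin (m - 1) → ℝ)
    (hp : ∀ j, t₀ < p j ∧ p j < T)
    (f : ℝ → ℝ) (hf : ContinuousOn f (Set.Icc t₀ T))
    (a : Fin (m - 1) → ℝ → ℝ) (ha : ∀ j, ContinuousOn (a j) (Set.Icc t₀ T))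
    (K : ℝ → ℝ → ℝ)
    (hK : ContinuousOn (fun q : ℝ × ℝ => K q.1 q.2)
      {q : ℝ × ℝ | t₀ ≤ q.2 ∧ q.2 ≤ q.1 ∧ q.1 ≤ T})
    (lam₀ : ℝ)
    (Kn : ℕ → ℝ → ℝ → ℝ)
    (hKn1 : ∀ t s, Kn 1 t s = K t s)
    (hKnrec : ∀ n, 2 ≤ n → ∀ t s, Kn n t s = ∫ z in s..t, K t z * Kn (n - 1) z s)
    (R : ℝ → ℝ → ℝ → ℝ)
    (hR : ∀ t s lam', R t s lam' = ∑' n : ℕ, lam' ^ (n + 1) * Kn (n + 1) t s)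
    (F : ℝ → ℝ → ℝ)
    (hF : ∀ t lam', F t lam' = f t + ∫ s in t₀..t, R t s lam' * f s)
    (b : Fin (m - 1) → ℝ → ℝ → ℝ)
    (hb : ∀ j t lam', b j t lam' = a j t + ∫ s in t₀..t, R t s lam' * a j s)
    (A : Matrix (Fin (m - 1)) (Fin (m - 1)) ℝ)
    (hA : ∀ i j, A i j = (if i = j then 1 else 0) + b j (p i) lam₀)
    (d : Fin (m - 1) → ℝ)
    (hd : ∀ i, d i = F (p i) lam₀)
    (r : ℕ)
    (hrank : A.rank = r)
    (horth : ∀ y, Aᵀ *ᵥ y = 0 → d ⬝ᵥ y = 0) :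
    (∃ x : C(Set.Icc t₀ T, ℝ),
      ∀ t ∈ Set.Icc t₀ T,
        Set.IccExtend ht.le x t + ∑ j, a j t * Set.IccExtend ht.le x (p j) =
          lam₀ * (∫ s in t₀..t, K t s * Set.IccExtend ht.le x s) + f t) ∧
    ∃ (c₀ : Fin (m - 1) → ℝ) (W : Submodule ℝ (Fin (m - 1) → ℝ)),
      Module.finrank ℝ W = (m - 1) - r ∧
      {c : Fin (m - 1) → ℝ | A *ᵥ c = d} = (fun w => c₀ + w) '' (W : Set (Fin (m - 1) → ℝ)) ∧
      Set.BijOn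
        (fun x : C(Set.Icc t₀ T, ℝ) => fun j => Set.IccExtend ht.le x (p j))
        {x : C(Set.Icc t₀ T, ℝ) |
          ∀ t ∈ Set.Icc t₀ T,
            Set.IccExtend ht.le x t + ∑ j, a j t * Set.IccExtend ht.le x (p j) =
              lam₀ * (∫ s in t₀..t, K t s * Set.IccExtend ht.le x s) + f t}
        {c : Fin (m - 1) → ℝ | A *ᵥ c = d} := by
  have hΔ : IsClosed {q : ℝ × ℝ | t₀ ≤ q.2 ∧ q.2 ≤ q.1 ∧ q.1 ≤ T} :=
    (isClosed_le continuous_const continuous_snd).inter <|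
      (isClosed_le continuous_snd continuous_fst).inter (isClosed_le continuous_fst continuous_const)
  obtain ⟨Kc, hKc, hKcK⟩ := hK.exists_continuous_eqOn hΔ
  obtain ⟨fc, hfc, hfcf⟩ := hf.exists_continuous_eqOn isClosed_Icc
  choose ac hac haca using fun j => (ha j).exists_continuous_eqOn isClosed_Icc
  set K' : ℝ → ℝ → ℝ := fun t s => Kc (t, s)
  have hK'K : ∀ t s, t₀ ≤ s → s ≤ t → t ≤ T → K' t s = K t s :=
    fun t s h1 h2 h3 => hKcK ⟨h1, h2, h3⟩
  have hpI : ∀ j, p j ∈ Icc t₀ T := fun j => ⟨(hp j).1.le, (hp j).2.le⟩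
  have hRK' : ∀ i, ∀ s ∈ Icc t₀ (p i), R (p i) s lam₀ = volterraResolvent K' lam₀ (p i) s :=
    fun i s hs => (hR _ _ _).trans <| tsum_congr fun n => by
      rw [iteratedKernel_eq_of_recursion hK'K hKn1 hKnrec n _ _ hs.1 hs.2 (hpI i).2]
  have hload : ∀ {g gc : ℝ → ℝ}, EqOn gc g (Icc t₀ T) → ∀ i,
      g (p i) + ∫ s in t₀..p i, R (p i) s lam₀ * g s = resolventSolution K' lam₀ t₀ gc (p i) :=
    fun hg i => add_integral_eq_resolventSolution (hRK' i)
      (hg.mono (Icc_subset_Icc_right (hpI i).2)) (hpI i).1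
  have hbij := bijOn_loads_isLoadedVolterraSolution (lam := lam₀) ht.le (K := K') hKc hfc hac hpI
    (A := A) (d := d) (fun i j => by rw [hA, hb, hload (haca j)])
    (fun i => by rw [hd, hF, hload hfcf])
  simp only [isLoadedVolterraSolution_congr hK'K hfcf haca] at hbij
  obtain ⟨c₀, hc₀⟩ := A.exists_mulVec_eq_of_forall_dotProduct_eq_zero horth
  obtain ⟨x₀, hx₀, -⟩ := hbij.surjOn hc₀
  refine ⟨⟨x₀, hx₀⟩, c₀, LinearMap.ker A.mulVecLin, ?_, setOf_mulVec_eq hc₀, hbij⟩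
  rw [finrank_ker_mulVecLin, Fintype.card_fin, hrank]

/-- Theorem 3 (solvable case): if det A(λ₀) = 0, rank A(λ₀) = r and d(λ₀) is
orthogonal to every solution of the adjoint homogeneous system, then the LVIE has
solutions and its set of continuous solutions is in bijection (via the load map)
with an affine subspace of ℝ^{m-1} of dimension (m−1) − r. -/
theorem lvie_solution_family_of_solvable_slae
    (t₀ T : ℝ) (ht : t₀ < T) (m : ℕ) (hm : 2 ≤ m)
    (p : Fin (m - 1) → ℝ) (hpmono : StrictMono p)
    (hp : ∀ j, t₀ < p j ∧ p j < T)
    (f : ℝ → ℝ) (hf : ContinuousOn f (Set.Icc t₀ T))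
    (a : Fin (m - 1) → ℝ → ℝ) (ha : ∀ j, ContinuousOn (a j) (Set.Icc t₀ T))
    (K : ℝ → ℝ → ℝ)
    (hK : ContinuousOn (fun q : ℝ × ℝ => K q.1 q.2)
      {q : ℝ × ℝ | t₀ ≤ q.2 ∧ q.2 ≤ q.1 ∧ q.1 ≤ T})
    (lam₀ : ℝ)
    (Kn : ℕ → ℝ → ℝ → ℝ)
    (hKn1 : ∀ t s, Kn 1 t s = K t s)
    (hKnrec : ∀ n, 2 ≤ n → ∀ t s, Kn n t s = ∫ z in s..t, K t z * Kn (n - 1) z s)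
    (R : ℝ → ℝ → ℝ → ℝ)
    (hR : ∀ t s lam', R t s lam' = ∑' n : ℕ, lam' ^ (n + 1) * Kn (n + 1) t s)
    (F : ℝ → ℝ → ℝ)
    (hF : ∀ t lam', F t lam' = f t + ∫ s in t₀..t, R t s lam' * f s)
    (b : Fin (m - 1) → ℝ → ℝ → ℝ)
    (hb : ∀ j t lam', b j t lam' = a j t + ∫ s in t₀..t, R t s lam' * a j s)
    (A : Matrix (Fin (m - 1)) (Fin (m - 1)) ℝ)
    (hA : ∀ i j, A i j = (if i = j then 1 else 0) + b j (p i) lam₀)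
    (d : Fin (m - 1) → ℝ)
    (hd : ∀ i, d i = F (p i) lam₀)
    (r : ℕ)
    (hdet : A.det = 0) (hrank : A.rank = r)
    (horth : ∀ y, Aᵀ *ᵥ y = 0 → d ⬝ᵥ y = 0) :
    (∃ x : C(Set.Icc t₀ T, ℝ),
      ∀ t ∈ Set.Icc t₀ T,
        Set.IccExtend ht.le x t + ∑ j, a j t * Set.IccExtend ht.le x (p j) =
          lam₀ * (∫ s in t₀..t, K t s * Set.IccExtend ht.le x s) + f t) ∧
    ∃ (c₀ : Fin (m - 1) → ℝ) (W : Submodule ℝ (Fin (m - 1) → ℝ)),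
      Module.finrank ℝ W = (m - 1) - r ∧
      {c : Fin (m - 1) → ℝ | A *ᵥ c = d} = (fun w => c₀ + w) '' (W : Set (Fin (m - 1) → ℝ)) ∧
      Set.BijOn
        (fun x : C(Set.Icc t₀ T, ℝ) => fun j => Set.IccExtend ht.le x (p j))
        {x : C(Set.Icc t₀ T, ℝ) |
          ∀ t ∈ Set.Icc t₀ T,
            Set.IccExtend ht.le x t + ∑ j, a j t * Set.IccExtend ht.le x (p j) =
              lam₀ * (∫ s in t₀..t, K t s * Set.IccExtend ht.le x s) + f t}
        {c : Fin (m - 1) → ℝ | A *ᵥ c = d} :=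
  lvie_solution_family_of_solvable_slae_general t₀ T ht m p hp f hf a ha K hK lam₀ Kn hKn1 hKnrec R
    hR F hF b hb A hA d hd r hrank horth
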